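/- arXiv:2603.23672 — 5 statements merged into one kernel-verified Lean document; each statement's English description precedes it below -/
import Mathlib

section
/- Let f : ℝ → ℝ be three times continuously differentiable and x : ℝ → ℝ be twice continuously differentiable, with |x'(s)| ≤ v_max and |x''(s)| ≤ a_max for all s. Let f_x, Z, C > 0 be constants and set μ(s) = −(f_x/Z)·x(s). Let K ⊂ ℤ² be a finite set of N_u·N_v pixels such that Σ_{(u,v)∈K} u = 0 and |u| ≤ N_u/2 for every (u,v) ∈ K. Suppose |f'(w)| ≤ F₁, |f''(w)| ≤ F₂ and |f'''(w)| ≤ F₃ for all w in an interval containing u + μ(s) for every (u,v) ∈ K and every s ∈ [t, t+Δt]. Define the net event count N_net = (1/C)·Σ_{(u,v)∈K} [f(u + μ(t+Δt)) − f(u + μ(t))] and the net event rate estimator M = −(N_u N_v f_x/(C Z))·x'(t)·f'(μ(t)). Then for every Δt > 0, |N_net − M·Δt| ≤ L_time·Δt² + L_space·Δt, where L_time = (N_u N_v/(2C))·[F₂·(f_x·v_max/Z)² + F₁·(f_x·a_max/Z)] and L_space = (N_u N_v/C)·(N_u²/8)·(f_x·v_max/Z)·F₃. -/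
/-!
Expand each pixel's contribution twice by Taylor's theorem. In time, with `g(s) = f(u + μ s)`,
`g(t + Δt) - g(t) = f'(u + μ t) μ'(t) Δt` up to `sup |g''| Δt² / 2`, and `g'' = f'' μ'² + f' μ''`
gives `L_time`. In space, `f'(u + μ t) = f'(μ t) + f''(μ t) u` up to `F₃ u² / 2 ≤ F₃ N_u² / 8`;
summed over the kernel the linear term vanishes because `∑ u = 0`, which leaves `L_space`.
The expansion point `μ t` lies in `I` because it is the centroid of the points `u + μ t`.
-/

open Finset Set

theorem abs_sub_sub_deriv_mul_le {g g' g'' : ℝ → ℝ} {a b B : ℝ} (hab : a ≤ b)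
    (hg : ∀ s ∈ Icc a b, HasDerivAt g (g' s) s) (hg' : ∀ s ∈ Icc a b, HasDerivAt g' (g'' s) s)
    (hB : ∀ s ∈ Icc a b, |g'' s| ≤ B) :
    |g b - g a - g' a * (b - a)| ≤ B / 2 * (b - a) ^ 2 := by
  have hg'_sub : ∀ s ∈ Icc a b, ‖g' s - g' a‖ ≤ B * (s - a) :=
    norm_image_sub_le_of_norm_deriv_right_le_segment
      (fun s hs => (hg' s hs).continuousAt.continuousWithinAt)
      (fun s hs => (hg' s (Ico_subset_Icc_self hs)).hasDerivWithinAt)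
      (fun s hs => hB s (Ico_subset_Icc_self hs))
  have hbound (s : ℝ) : HasDerivAt (fun s => B / 2 * (s - a) ^ 2) (B * (s - a)) s :=
    ((((hasDerivAt_id' s).sub_const a).fun_pow 2).const_mul (B / 2)).congr_deriv (by ring)
  have hrem (s) (hs : s ∈ Ico a b) :
      HasDerivWithinAt (fun s => g s - g a - g' a * (s - a)) (g' s - g' a) (Ici s) s :=
    ((((hg s (Ico_subset_Icc_self hs)).sub_const (g a)).sub
      (((hasDerivAt_id' s).sub_const a).const_mul (g' a))).congr_deriv (by ring)).hasDerivWithinAt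
  simpa using image_norm_le_of_norm_deriv_right_le_deriv_boundary
    (fun s hs => ((hg s hs).continuousAt.continuousWithinAt.sub continuousWithinAt_const).sub
      (by fun_prop)) hrem (by simp) hbound (fun s hs => hg'_sub s (Ico_subset_Icc_self hs))
    (right_mem_Icc.2 hab)

theorem abs_comp_sub_sub_deriv_mul_le {f f' f'' γ γ' γ'' : ℝ → ℝ} {I : Set ℝ}
    {a b F₁ F₂ V A : ℝ} (hab : a ≤ b)
    (hf : ∀ w ∈ I, HasDerivAt f (f' w) w) (hf' : ∀ w ∈ I, HasDerivAt f' (f'' w) w)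
    (hF₁ : ∀ w ∈ I, |f' w| ≤ F₁) (hF₂ : ∀ w ∈ I, |f'' w| ≤ F₂)
    (hγ : ∀ s ∈ Icc a b, HasDerivAt γ (γ' s) s) (hγ' : ∀ s ∈ Icc a b, HasDerivAt γ' (γ'' s) s)
    (hγI : ∀ s ∈ Icc a b, γ s ∈ I)
    (hV : ∀ s ∈ Icc a b, |γ' s| ≤ V) (hA : ∀ s ∈ Icc a b, |γ'' s| ≤ A) :
    |f (γ b) - f (γ a) - f' (γ a) * γ' a * (b - a)| ≤
      (F₂ * V ^ 2 + F₁ * A) / 2 * (b - a) ^ 2 := by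
  refine abs_sub_sub_deriv_mul_le (g := f ∘ γ) (g' := fun s => f' (γ s) * γ' s)
    (g'' := fun s => f'' (γ s) * γ' s * γ' s + f' (γ s) * γ'' s) hab
    (fun s hs => (hf _ (hγI s hs)).comp s (hγ s hs))
    (fun s hs => ((hf' _ (hγI s hs)).comp s (hγ s hs)).mul (hγ' s hs)) fun s hs => ?_
  have hw := hγI s hs
  calc |f'' (γ s) * γ' s * γ' s + f' (γ s) * γ'' s|
      ≤ |f'' (γ s)| * |γ' s| ^ 2 + |f' (γ s)| * |γ'' s| := by
        simpa only [abs_mul, sq, mul_assoc] using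
          abs_add_le (f'' (γ s) * γ' s * γ' s) (f' (γ s) * γ'' s)
    _ ≤ F₂ * V ^ 2 + F₁ * A := by
        have := (abs_nonneg _).trans (hF₁ _ hw)
        have := (abs_nonneg _).trans (hF₂ _ hw)
        gcongr
        exacts [hF₂ _ hw, hV s hs, hF₁ _ hw, hA s hs]

theorem Convex.abs_sub_sub_deriv_mul_le {g g' g'' : ℝ → ℝ} {I : Set ℝ} {w₀ w₁ B : ℝ}
    (hI : Convex ℝ I) (hw₀ : w₀ ∈ I) (hw₁ : w₁ ∈ I)
    (hg : ∀ w ∈ I, HasDerivAt g (g' w) w) (hg' : ∀ w ∈ I, HasDerivAt g' (g'' w) w)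
    (hB : ∀ w ∈ I, |g'' w| ≤ B) :
    |g w₁ - g w₀ - g' w₀ * (w₁ - w₀)| ≤ B / 2 * (w₁ - w₀) ^ 2 := by
  have hseg (r : ℝ) (hr : r ∈ Icc (0 : ℝ) 1) : w₀ + r * (w₁ - w₀) ∈ I :=
    hI.add_smul_sub_mem hw₀ hw₁ hr
  have hline (r : ℝ) : HasDerivAt (fun r => w₀ + r * (w₁ - w₀)) (w₁ - w₀) r := by
    simpa using ((hasDerivAt_id r).mul_const (w₁ - w₀)).const_add w₀
  have := _root_.abs_sub_sub_deriv_mul_le (g := fun r => g (w₀ + r * (w₁ - w₀)))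
    (g' := fun r => g' (w₀ + r * (w₁ - w₀)) * (w₁ - w₀))
    (g'' := fun r => g'' (w₀ + r * (w₁ - w₀)) * (w₁ - w₀) * (w₁ - w₀)) zero_le_one
    (fun r hr => (hg _ (hseg r hr)).comp r (hline r))
    (fun r hr => ((hg' _ (hseg r hr)).comp r (hline r)).mul_const _)
    (fun r hr => by
      rw [abs_mul, abs_mul, mul_assoc, ← sq, sq_abs]
      exact mul_le_mul_of_nonneg_right (hB _ (hseg r hr)) (sq_nonneg _))
  simpa [mul_div_right_comm] using this

theorem Convex.mem_of_forall_add_mem_of_sum_eq_zero {ι E : Type*} [AddCommGroup E] [Module ℝ E]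
    {I : Set E} (hI : Convex ℝ I) {K : Finset ι} (hK : K.Nonempty) {u : ι → E}
    (hu : ∑ i ∈ K, u i = 0) {m : E} (hm : ∀ i ∈ K, u i + m ∈ I) : m ∈ I := by
  have := hI.centerMass_mem (t := K) (w := fun _ => (1 : ℝ)) (fun _ _ => zero_le_one)
    (by simpa using hK) hm
  simpa [Finset.centerMass, Finset.sum_add_distrib, hu, ← Nat.cast_smul_eq_nsmul ℝ,
    smul_smul, hK.card_ne_zero] using this

theorem abs_sum_sub_card_mul_le {ι : Type*} {K : Finset ι} {u D d : ι → ℝ} {d₀ d₁ v V E R : ℝ}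
    (hu : ∑ i ∈ K, u i = 0) (hD : ∀ i ∈ K, |D i - d i * v| ≤ E)
    (hd : ∀ i ∈ K, |d i - d₀ - d₁ * u i| ≤ R) (hv : |v| ≤ V) :
    |∑ i ∈ K, D i - #K * (d₀ * v)| ≤ #K * (E + V * R) := by
  have hsplit : ∑ i ∈ K, D i - #K * (d₀ * v) =
      ∑ i ∈ K, (D i - d i * v) + v * ∑ i ∈ K, (d i - d₀ - d₁ * u i) := by
    simp only [sum_sub_distrib, ← mul_sum, ← sum_mul, sum_const, nsmul_eq_mul, hu]
    ring
  have hDsum : |∑ i ∈ K, (D i - d i * v)| ≤ #K * E :=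
    (abs_sum_le_sum_abs _ _).trans ((sum_le_card_nsmul _ _ _ hD).trans_eq (nsmul_eq_mul _ _))
  have hdsum : |∑ i ∈ K, (d i - d₀ - d₁ * u i)| ≤ #K * R :=
    (abs_sum_le_sum_abs _ _).trans ((sum_le_card_nsmul _ _ _ hd).trans_eq (nsmul_eq_mul _ _))
  calc |∑ i ∈ K, D i - #K * (d₀ * v)|
      ≤ |∑ i ∈ K, (D i - d i * v)| + |v| * |∑ i ∈ K, (d i - d₀ - d₁ * u i)| := by
        rw [hsplit, ← abs_mul]; exact abs_add_le _ _
    _ ≤ #K * E + V * (#K * R) := by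
        gcongr
        exact (abs_nonneg _).trans hv
    _ = #K * (E + V * R) := by ring

theorem abs_sum_comp_add_sub_card_mul_le {ι : Type*} {K : Finset ι} {u : ι → ℝ}
    {f f' f'' f''' γ γ' γ'' : ℝ → ℝ} {I : Set ℝ} {a b U V A F₁ F₂ F₃ : ℝ}
    (hI : Convex ℝ I) (hu : ∑ i ∈ K, u i = 0) (hU : ∀ i ∈ K, |u i| ≤ U) (hab : a ≤ b)
    (hmem : ∀ i ∈ K, ∀ s ∈ Icc a b, u i + γ s ∈ I)
    (hf : ∀ w ∈ I, HasDerivAt f (f' w) w) (hf' : ∀ w ∈ I, HasDerivAt f' (f'' w) w)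
    (hf'' : ∀ w ∈ I, HasDerivAt f'' (f''' w) w)
    (hF₁ : ∀ w ∈ I, |f' w| ≤ F₁) (hF₂ : ∀ w ∈ I, |f'' w| ≤ F₂) (hF₃ : ∀ w ∈ I, |f''' w| ≤ F₃)
    (hγ : ∀ s ∈ Icc a b, HasDerivAt γ (γ' s) s) (hγ' : ∀ s ∈ Icc a b, HasDerivAt γ' (γ'' s) s)
    (hV : ∀ s ∈ Icc a b, |γ' s| ≤ V) (hA : ∀ s ∈ Icc a b, |γ'' s| ≤ A) :
    |∑ i ∈ K, (f (u i + γ b) - f (u i + γ a)) - #K * (f' (γ a) * (γ' a * (b - a)))| ≤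
      #K * ((F₂ * V ^ 2 + F₁ * A) / 2 * (b - a) ^ 2 + V * (b - a) * (F₃ / 2 * U ^ 2)) := by
  obtain rfl | hK := K.eq_empty_or_nonempty
  · simp
  have ha : a ∈ Icc a b := left_mem_Icc.2 hab
  have hγa : γ a ∈ I :=
    hI.mem_of_forall_add_mem_of_sum_eq_zero hK hu fun i hi => hmem i hi a ha
  have htime : ∀ i ∈ K, |f (u i + γ b) - f (u i + γ a) - f' (u i + γ a) * (γ' a * (b - a))| ≤
      (F₂ * V ^ 2 + F₁ * A) / 2 * (b - a) ^ 2 := fun i hi => by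
    simpa only [mul_assoc] using abs_comp_sub_sub_deriv_mul_le (γ := fun s => u i + γ s) hab
      hf hf' hF₁ hF₂ (fun s hs => (hγ s hs).const_add _) hγ' (hmem i hi) hV hA
  have hspace : ∀ i ∈ K, |f' (u i + γ a) - f' (γ a) - f'' (γ a) * u i| ≤ F₃ / 2 * U ^ 2 :=
    fun i hi => by
      have := hI.abs_sub_sub_deriv_mul_le hγa (hmem i hi a ha) hf' hf'' hF₃
      rw [add_sub_cancel_right] at this
      refine this.trans (mul_le_mul_of_nonneg_left ?_ ?_)
      · exact sq_le_sq' (abs_le.1 (hU i hi)).1 (abs_le.1 (hU i hi)).2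
      · linarith [(abs_nonneg _).trans (hF₃ _ hγa)]
  have hΔγ : |γ' a * (b - a)| ≤ V * (b - a) := by
    rw [abs_mul, abs_of_nonneg (sub_nonneg.2 hab)]
    exact mul_le_mul_of_nonneg_right (hV a ha) (sub_nonneg.2 hab)
  exact abs_sum_sub_card_mul_le hu htime hspace hΔγ

/-- **Theorem 1 (Net event count bound).**
An event camera observing a scene with horizontal logarithmic intensity profile `f`,
translating with position `x t` at distance `Z`, focal length `f_x`, contrast threshold `C`,
over a symmetric pixel kernel `K` of `N_u * N_v` pixels, produces a net event count
`N_net` satisfying `|N_net - M * Δt| ≤ L_time * Δt ^ 2 + L_space * Δt`. -/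
theorem net_event_count_bound
    (f x : ℝ → ℝ) (hf : ContDiff ℝ 3 f) (hx : ContDiff ℝ 2 x)
    (v_max a_max : ℝ)
    (hv : ∀ s : ℝ, |deriv x s| ≤ v_max)
    (ha : ∀ s : ℝ, |deriv (deriv x) s| ≤ a_max)
    (f_x Z C : ℝ) (hfx : 0 < f_x) (hZ : 0 < Z) (hC : 0 < C)
    (μ : ℝ → ℝ) (hμ : ∀ s : ℝ, μ s = -(f_x / Z) * x s)
    (N_u N_v : ℕ) (K : Finset (ℤ × ℤ)) (hcard : K.card = N_u * N_v)
    (hsum : ∑ p ∈ K, (p.1 : ℝ) = 0)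
    (hpix : ∀ p ∈ K, |(p.1 : ℝ)| ≤ (N_u : ℝ) / 2)
    (t Δt : ℝ) (hΔt : 0 < Δt)
    (I : Set ℝ) (hI : Convex ℝ I)
    (hmem : ∀ p ∈ K, ∀ s ∈ Set.Icc t (t + Δt), ((p.1 : ℝ) + μ s) ∈ I)
    (F₁ F₂ F₃ : ℝ)
    (hF₁ : ∀ w ∈ I, |deriv f w| ≤ F₁)
    (hF₂ : ∀ w ∈ I, |deriv (deriv f) w| ≤ F₂)
    (hF₃ : ∀ w ∈ I, |deriv (deriv (deriv f)) w| ≤ F₃)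
    (N_net M L_time L_space : ℝ)
    (hN : N_net = (1 / C) * ∑ p ∈ K, (f ((p.1 : ℝ) + μ (t + Δt)) - f ((p.1 : ℝ) + μ t)))
    (hM : M = -((N_u : ℝ) * (N_v : ℝ) * f_x / (C * Z)) * deriv x t * deriv f (μ t))
    (hLtime : L_time = ((N_u : ℝ) * (N_v : ℝ) / (2 * C)) *
      (F₂ * (f_x * v_max / Z) ^ 2 + F₁ * (f_x * a_max / Z)))
    (hLspace : L_space = ((N_u : ℝ) * (N_v : ℝ) / C) * ((N_u : ℝ) ^ 2 / 8) *
      (f_x * v_max / Z) * F₃) :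
    |N_net - M * Δt| ≤ L_time * Δt ^ 2 + L_space * Δt := by
  have hf₁ (w : ℝ) : HasDerivAt f (deriv f w) w := (hf.differentiable (by norm_num) w).hasDerivAt
  have hf₂ (w : ℝ) : HasDerivAt (deriv f) (deriv (deriv f) w) w :=
    ((hf.deriv' (n := 2)).differentiable (by norm_num) w).hasDerivAt
  have hf₃ (w : ℝ) : HasDerivAt (deriv (deriv f)) (deriv (deriv (deriv f)) w) w :=
    (((hf.deriv' (n := 2)).deriv' (n := 1)).differentiable one_ne_zero w).hasDerivAt
  have hx₁ (s : ℝ) : HasDerivAt x (deriv x s) s := (hx.differentiable (by norm_num) s).hasDerivAt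
  have hx₂ (s : ℝ) : HasDerivAt (deriv x) (deriv (deriv x) s) s :=
    ((hx.deriv' (n := 1)).differentiable one_ne_zero s).hasDerivAt
  set c := f_x / Z
  have hc : 0 < c := div_pos hfx hZ
  have hμ' (s : ℝ) : HasDerivAt μ (-c * deriv x s) s := by
    simpa only [← funext hμ] using (hx₁ s).const_mul (-c)
  have hscale {y Y : ℝ} (h : |y| ≤ Y) : |-c * y| ≤ c * Y := by
    rw [abs_mul, abs_neg, abs_of_pos hc]; exact mul_le_mul_of_nonneg_left h hc.le
  have key := abs_sum_comp_add_sub_card_mul_le (u := fun p : ℤ × ℤ => (p.1 : ℝ)) hI hsum hpix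
    (by linarith) hmem (fun w _ => hf₁ w) (fun w _ => hf₂ w) (fun w _ => hf₃ w) hF₁ hF₂ hF₃
    (fun s _ => hμ' s) (fun s _ => (hx₂ s).const_mul (-c))
    (fun s _ => hscale (hv s)) (fun s _ => hscale (ha s))
  rw [add_sub_cancel_left] at key
  have hMΔt : M * Δt = 1 / C * (#K * (deriv f (μ t) * (-c * deriv x t * Δt))) := by
    rw [hM, hcard]; push_cast; ring
  calc |N_net - M * Δt|
      = 1 / C * |∑ p ∈ K, (f (p.1 + μ (t + Δt)) - f (p.1 + μ t))
          - #K * (deriv f (μ t) * (-c * deriv x t * Δt))| := by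
        rw [hN, hMΔt, ← mul_sub, abs_mul, abs_of_pos (one_div_pos.2 hC)]
    _ ≤ 1 / C * (#K * ((F₂ * (c * v_max) ^ 2 + F₁ * (c * a_max)) / 2 * Δt ^ 2
          + c * v_max * Δt * (F₃ / 2 * ((N_u : ℝ) / 2) ^ 2))) :=
        mul_le_mul_of_nonneg_left key (one_div_pos.2 hC).le
    _ = L_time * Δt ^ 2 + L_space * Δt := by
        rw [hLtime, hLspace, hcard]; push_cast; ring
end

section
/- Let k ≠ 0 and define the linear logarithmic intensity profile f(u) = k·u. Let x : ℝ → ℝ be twice continuously differentiable with |x''(s)| ≤ a_max for all s, let f_x, Z, C > 0 be constants, set μ(s) = −(f_x/Z)·x(s), and let K ⊂ ℤ² be a finite set of N_u·N_v pixels. Define N_net = (1/C)·Σ_{(u,v)∈K} [f(u + μ(t+Δt)) − f(u + μ(t))] and M_Linear = −(N_u N_v f_x k/(C Z))·x'(t). Then for every Δt > 0, |N_net − M_Linear·Δt| ≤ |k|·(N_u N_v/(2C))·(f_x/Z)·a_max·Δt²; that is, the net event count is proportional to the instantaneous velocity x'(t), the spatial error vanishes entirely, and the temporal error depends only on the acceleration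 bound a_max. -/
open Real Finset

/-! For a linear profile every pixel contributes the same amount `k (μ(t + Δt) - μ t)`, whatever
its position, so `N_net - M_Linear Δt` is a constant multiple of the first-order Taylor remainder
`x(t + Δt) - x t - x'(t) Δt` of the trajectory, which is at most `a_max Δt² / 2` in absolute value. -/

theorem abs_sub_sub_deriv_mul_le_s2 {x : ℝ → ℝ} (hx : Differentiable ℝ x)
    (hx' : Differentiable ℝ (deriv x)) {M : ℝ} (hM : ∀ s, |deriv (deriv x) s| ≤ M)
    (t : ℝ) {h : ℝ} (hh : 0 ≤ h) :
    |x (t + h) - x t - deriv x t * h| ≤ M * h ^ 2 / 2 := by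
  have hvel : ∀ s, |deriv x s - deriv x t| ≤ M * |s - t| := fun s =>
    Convex.norm_image_sub_le_of_norm_deriv_le (fun y _ => hx' y) (fun y _ => hM y)
      convex_univ (Set.mem_univ t) (Set.mem_univ s)
  -- Fence the Taylor remainder `g` between `±M (s - t)² / 2` on `[t, t + h]`.
  let g : ℝ → ℝ := fun s => x s - x t - deriv x t * (s - t)
  have hg : ∀ s, HasDerivAt g (deriv x s - deriv x t) s := fun s =>
    (((hx s).hasDerivAt.sub_const (x t)).sub
      (((hasDerivAt_id' s).sub_const t).const_mul (deriv x t))).congr_deriv (by rw [mul_one])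
  have hB : ∀ s, HasDerivAt (fun s => M * (s - t) ^ 2 / 2) (M * (s - t)) s := fun s =>
    ((((hasDerivAt_id' s).sub_const t).pow 2).const_mul M |>.div_const 2).congr_deriv
      (by push_cast; ring)
  have := image_norm_le_of_norm_deriv_right_le_deriv_boundary (a := t) (b := t + h)
    (fun s _ => (hg s).continuousAt.continuousWithinAt) (fun s _ => (hg s).hasDerivWithinAt)
    (by simp [g]) hB
    (fun s hs => (hvel s).trans_eq (by rw [abs_of_nonneg (sub_nonneg.2 hs.1)]))
    (Set.right_mem_Icc.2 (by linarith))
  simpa [g] using this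

theorem sum_translate_sub_eq_card_mul {ι : Type*} {f : ℝ → ℝ} {k : ℝ} (hf : ∀ u, f u = k * u)
    (K : Finset ι) (c : ι → ℝ) (a b : ℝ) :
    ∑ i ∈ K, (f (c i + b) - f (c i + a)) = K.card * (k * (b - a)) := by
  simp only [hf, ← mul_sub, add_sub_add_left_eq_sub, sum_const, nsmul_eq_mul]

theorem net_event_count_linear_profile_general
    (k : ℝ)
    (f : ℝ → ℝ) (hf : ∀ u : ℝ, f u = k * u)
    (x : ℝ → ℝ) (hx : ContDiff ℝ 2 x)
    (a_max : ℝ)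
    (ha : ∀ s : ℝ, |deriv (deriv x) s| ≤ a_max)
    (f_x Z C : ℝ) (hfx : 0 < f_x) (hZ : 0 < Z) (hC : 0 < C)
    (μ : ℝ → ℝ) (hμ : ∀ s : ℝ, μ s = -(f_x / Z) * x s)
    (N_u N_v : ℕ) (K : Finset (ℤ × ℤ)) (hcard : K.card = N_u * N_v)
    (t Δt : ℝ) (hΔt : 0 < Δt)
    (N_net M_Linear : ℝ)
    (hN : N_net = (1 / C) * ∑ p ∈ K, (f ((p.1 : ℝ) + μ (t + Δt)) - f ((p.1 : ℝ) + μ t)))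
    (hM : M_Linear = -((N_u : ℝ) * (N_v : ℝ) * f_x * k / (C * Z)) * deriv x t) :
    |N_net - M_Linear * Δt| ≤
      |k| * ((N_u : ℝ) * (N_v : ℝ) / (2 * C)) * (f_x / Z) * a_max * Δt ^ 2 := by
  have hx' : Differentiable ℝ (deriv x) :=
    (hx.deriv' (n := 1)).differentiable one_ne_zero
  have htaylor := abs_sub_sub_deriv_mul_le_s2 (hx.differentiable (by norm_num)) hx' ha t hΔt.le
  have hgain : 0 ≤ (N_u : ℝ) * N_v / C * (f_x / Z) := by positivity
  have hnet : N_net - M_Linear * Δt =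
      -(k * ((N_u : ℝ) * N_v / C * (f_x / Z))) * (x (t + Δt) - x t - deriv x t * Δt) := by
    rw [hN, hM, sum_translate_sub_eq_card_mul hf, hcard, hμ, hμ]
    push_cast
    field_simp
    ring
  calc |N_net - M_Linear * Δt|
      = |k| * ((N_u : ℝ) * N_v / C * (f_x / Z)) * |x (t + Δt) - x t - deriv x t * Δt| := by
        rw [hnet, abs_mul, abs_neg, abs_mul, abs_of_nonneg hgain]
    _ ≤ |k| * ((N_u : ℝ) * N_v / C * (f_x / Z)) * (a_max * Δt ^ 2 / 2) := by gcongr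
    _ = |k| * ((N_u : ℝ) * (N_v : ℝ) / (2 * C)) * (f_x / Z) * a_max * Δt ^ 2 := by ring

/-- **Example 2 (Linear profile).** For the linear logarithmic intensity profile
`f u = k * u`, the net event count is proportional to the instantaneous velocity `x' t`,
the spatial error vanishes entirely, and the temporal error depends only on the
acceleration bound `a_max`. -/
theorem net_event_count_linear_profile
    (k : ℝ) (hk : k ≠ 0)
    (f : ℝ → ℝ) (hf : ∀ u : ℝ, f u = k * u)
    (x : ℝ → ℝ) (hx : ContDiff ℝ 2 x)
    (a_max : ℝ)
    (ha : ∀ s : ℝ, |deriv (deriv x) s| ≤ a_max)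
    (f_x Z C : ℝ) (hfx : 0 < f_x) (hZ : 0 < Z) (hC : 0 < C)
    (μ : ℝ → ℝ) (hμ : ∀ s : ℝ, μ s = -(f_x / Z) * x s)
    (N_u N_v : ℕ) (K : Finset (ℤ × ℤ)) (hcard : K.card = N_u * N_v)
    (t Δt : ℝ) (hΔt : 0 < Δt)
    (N_net M_Linear : ℝ)
    (hN : N_net = (1 / C) * ∑ p ∈ K, (f ((p.1 : ℝ) + μ (t + Δt)) - f ((p.1 : ℝ) + μ t)))
    (hM : M_Linear = -((N_u : ℝ) * (N_v : ℝ) * f_x * k / (C * Z)) * deriv x t) :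
    |N_net - M_Linear * Δt| ≤
      |k| * ((N_u : ℝ) * (N_v : ℝ) / (2 * C)) * (f_x / Z) * a_max * Δt ^ 2 :=
  net_event_count_linear_profile_general k f hf x hx a_max ha f_x Z C hfx hZ hC μ hμ N_u N_v K hcard
    t Δt hΔt N_net M_Linear hN hM
end

section
/- Let p₁ > 0, ω > 0, η ∈ ℝ with η·p₁² > 1, and let 0 < δ ≤ 4·(η·p₁² − 1)/(η²·ω²·p₁² + 4). Then for all t ∈ ℝ, B(t) = 4·(1 − η·p₁²) + δ·(η·ω·p₁·cos(ωt) − 2·sin(ωt))² ≤ 0, and consequently Det(Q(t)) = −(δ·ω²/(4·p₁²))·cos²(ωt)·B(t) ≥ 0 for all t ∈ ℝ. -/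
open Real Matrix

/-- Under the determinant condition `0 < δ ≤ 4 (η p₁² - 1) / (η² ω² p₁² + 4)`, the
quantity `B t` is nonpositive for all `t`, and consequently `det (Q t) ≥ 0` for all `t`. -/
theorem det_Q_nonneg
    (p₁ ω δ η : ℝ) (hp₁ : 0 < p₁) (hω : 0 < ω) (hη : η * p₁ ^ 2 > 1)
    (hδ : 0 < δ) (hδ' : δ ≤ 4 * (η * p₁ ^ 2 - 1) / (η ^ 2 * ω ^ 2 * p₁ ^ 2 + 4))
    (A : ℝ → Matrix (Fin 2) (Fin 2) ℝ)
    (hA : ∀ t : ℝ, A t =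
      !![0, 1; -δ * ω ^ 2 * (cos (ω * t)) ^ 2, -p₁ - δ * ω * sin (2 * ω * t)])
    (P : Matrix (Fin 2) (Fin 2) ℝ) (hP : P = !![1, 1 / p₁; 1 / p₁, η])
    (Q : ℝ → Matrix (Fin 2) (Fin 2) ℝ)
    (hQ : ∀ t : ℝ, Q t = -((1 : ℝ) / 2) • (P * A t + (A t)ᵀ * P))
    (B : ℝ → ℝ)
    (hB : ∀ t : ℝ, B t = 4 * (1 - η * p₁ ^ 2) +
      δ * (η * ω * p₁ * cos (ω * t) - 2 * sin (ω * t)) ^ 2) :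
    ∀ t : ℝ, B t ≤ 0 ∧
      (Q t).det = -(δ * ω ^ 2 / (4 * p₁ ^ 2)) * (cos (ω * t)) ^ 2 * B t ∧
      0 ≤ (Q t).det := by
  intro t
  have hpos : (0:ℝ) < η ^ 2 * ω ^ 2 * p₁ ^ 2 + 4 := by positivity
  have hpyth : sin (ω * t) ^ 2 + cos (ω * t) ^ 2 = 1 := sin_sq_add_cos_sq _
  have hkey : (η * ω * p₁ * cos (ω * t) - 2 * sin (ω * t)) ^ 2 ≤
      η ^ 2 * ω ^ 2 * p₁ ^ 2 + 4 := by
    nlinarith [sq_nonneg (η * ω * p₁ * sin (ω * t) + 2 * cos (ω * t))]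
  have hδ'' : δ * (η ^ 2 * ω ^ 2 * p₁ ^ 2 + 4) ≤ 4 * (η * p₁ ^ 2 - 1) := by
    calc δ * (η ^ 2 * ω ^ 2 * p₁ ^ 2 + 4)
        ≤ 4 * (η * p₁ ^ 2 - 1) / (η ^ 2 * ω ^ 2 * p₁ ^ 2 + 4) *
          (η ^ 2 * ω ^ 2 * p₁ ^ 2 + 4) := by
            exact mul_le_mul_of_nonneg_right hδ' hpos.le
      _ = 4 * (η * p₁ ^ 2 - 1) := by field_simp
  have hBle : B t ≤ 0 := by
    rw [hB]
    have h1 : δ * (η * ω * p₁ * cos (ω * t) - 2 * sin (ω * t)) ^ 2 ≤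
        δ * (η ^ 2 * ω ^ 2 * p₁ ^ 2 + 4) := mul_le_mul_of_nonneg_left hkey hδ.le
    linarith
  have hsin2 : sin (2 * ω * t) = 2 * sin (ω * t) * cos (ω * t) := by
    rw [show 2 * ω * t = 2 * (ω * t) by ring, sin_two_mul]
  have hdet : (Q t).det = -(δ * ω ^ 2 / (4 * p₁ ^ 2)) * (cos (ω * t)) ^ 2 * B t := by
    rw [hQ, hA, hP, hB]
    simp [Matrix.det_fin_two, Matrix.mul_apply, Fin.sum_univ_two, Matrix.transpose,
      hsin2]
    field_simp
    ring
  refine ⟨hBle, hdet, ?_⟩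
  rw [hdet]
  have : 0 ≤ -(B t) := by linarith
  have h2 : (0:ℝ) ≤ δ * ω ^ 2 / (4 * p₁ ^ 2) := by positivity
  nlinarith [mul_nonneg (mul_nonneg h2 (sq_nonneg (cos (ω * t)))) this]
end

section
/- Let p₁ > 0 and ω > 0, and consider the function g(η) = 4·(η·p₁² − 1)/(η²·ω²·p₁² + 4) on the domain η > 1/p₁². Then g attains its maximum over this domain at η† = (1/p₁²)·(1 + √(1 + 4·p₁²/ω²)), and the maximum value equals δ† = (√(ω² + 4·p₁²) − ω)/(2·ω); that is, g(η†) = δ† and g(η) ≤ δ† for all η > 1/p₁². -/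
open Real

/-!
Substituting `u = η p₁²` and `c = p₁² / ω²` turns `g` into `4c (u - 1) / (u² + 4c)`.
With `s = √(1 + 4c)` we have `4c = s² - 1`, and then
`(s - 1)(u² + 4c) - 8c (u - 1) = (s - 1)(u - (s + 1))²`,
so `g ≤ (s - 1) / 2` everywhere, with equality at `u = 1 + s`.
-/

noncomputable def normalizedGain (c u : ℝ) : ℝ := 4 * c * (u - 1) / (u ^ 2 + 4 * c)

lemma normalizedGain_le {c : ℝ} (hc : 0 < c) (u : ℝ) :
    normalizedGain c u ≤ (√(1 + 4 * c) - 1) / 2 := by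
  set s := √(1 + 4 * c)
  have hs : s ^ 2 = 1 + 4 * c := sq_sqrt (by positivity)
  have hs1 : 1 ≤ s := one_le_sqrt.2 (by linarith)
  rw [normalizedGain, div_le_div_iff₀ (by positivity) two_pos, ← sub_nonneg]
  have hgap : (s - 1) * (u ^ 2 + 4 * c) - 4 * c * (u - 1) * 2 = (s - 1) * (u - (s + 1)) ^ 2 := by
    linear_combination (2 * u - s - 1) * hs
  rw [hgap]
  exact mul_nonneg (by linarith) (sq_nonneg _)

lemma normalizedGain_one_add_sqrt {c : ℝ} (hc : 0 ≤ c) :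
    normalizedGain c (1 + √(1 + 4 * c)) = (√(1 + 4 * c) - 1) / 2 := by
  set s := √(1 + 4 * c)
  have hs : s ^ 2 = 1 + 4 * c := sq_sqrt (by positivity)
  rw [normalizedGain, div_eq_div_iff (by positivity) two_ne_zero]
  linear_combination (-(1 + s)) * hs

lemma gain_eq_normalizedGain {p ω : ℝ} (hp : p ≠ 0) (hω : ω ≠ 0) (η : ℝ) :
    4 * (η * p ^ 2 - 1) / (η ^ 2 * ω ^ 2 * p ^ 2 + 4) =
      normalizedGain (p ^ 2 / ω ^ 2) (η * p ^ 2) := by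
  rw [normalizedGain]
  field_simp

lemma sqrt_sq_add_eq_mul_sqrt {ω : ℝ} (hω : 0 < ω) (a : ℝ) :
    √(ω ^ 2 + a) = ω * √(1 + a / ω ^ 2) := by
  rw [← sqrt_sq hω.le, ← sqrt_mul (sq_nonneg ω), sqrt_sq hω.le]
  congr 1
  field_simp

/-- The function `g η = 4 (η p₁² - 1) / (η² ω² p₁² + 4)` attains its maximum over
`η > 1 / p₁²` at `η† = (1 / p₁²) (1 + √(1 + 4 p₁² / ω²))`, with maximum value
`δ† = (√(ω² + 4 p₁²) - ω) / (2 ω)`. -/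
theorem delta_dagger_is_maximum
    (p₁ ω : ℝ) (hp₁ : 0 < p₁) (hω : 0 < ω)
    (g : ℝ → ℝ)
    (hg : ∀ η : ℝ, g η = 4 * (η * p₁ ^ 2 - 1) / (η ^ 2 * ω ^ 2 * p₁ ^ 2 + 4))
    (ηd δd : ℝ)
    (hηd : ηd = (1 / p₁ ^ 2) * (1 + Real.sqrt (1 + 4 * p₁ ^ 2 / ω ^ 2)))
    (hδd : δd = (Real.sqrt (ω ^ 2 + 4 * p₁ ^ 2) - ω) / (2 * ω)) :
    ηd > 1 / p₁ ^ 2 ∧ g ηd = δd ∧ ∀ η : ℝ, η > 1 / p₁ ^ 2 → g η ≤ δd := by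
  set c := p₁ ^ 2 / ω ^ 2
  have hc : 0 < c := by positivity
  have h4c : 4 * p₁ ^ 2 / ω ^ 2 = 4 * c := mul_div_assoc _ _ _
  rw [h4c] at hηd
  have hg' (η : ℝ) : g η = normalizedGain c (η * p₁ ^ 2) :=
    (hg η).trans (gain_eq_normalizedGain hp₁.ne' hω.ne' η)
  have hηd' : ηd * p₁ ^ 2 = 1 + √(1 + 4 * c) := by
    rw [hηd, mul_div_assoc']
    field_simp
  have hδd' : δd = (√(1 + 4 * c) - 1) / 2 := by
    rw [hδd, sqrt_sq_add_eq_mul_sqrt hω, h4c]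
    field_simp
  refine ⟨?_, ?_, fun η _ ↦ ?_⟩
  · rw [hηd, gt_iff_lt, lt_mul_iff_one_lt_right (by positivity)]
    have : 0 < √(1 + 4 * c) := sqrt_pos.2 (by positivity)
    linarith
  · rw [hg', hηd', hδd', normalizedGain_one_add_sqrt hc.le]
  · rw [hg', hδd']
    exact normalizedGain_le hc _
end

section
/- Let p₁ > 0, ω > 0, set η† = (1/p₁²)·(1 + √(1 + 4·p₁²/ω²)) and δ† = (√(ω² + 4·p₁²) − ω)/(2·ω), and suppose 0 < δ ≤ δ†. Then with η = η†, the symmetric matrix Q(t) = −(1/2)·(P·A(t) + A(t)ᵀ·P) is positive semidefinite for every t ∈ ℝ. -/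
/-!
Put `R = √(1 + 4p₁²/ω²)`, so that `ω²(R² - 1) = 4p₁²`, `η† = (1 + R)/p₁²` and `δ† = (R - 1)/2`.
With `s = sin ωt` and `c = cos ωt` the entries of `Q t` satisfy
`p₁² q₂₂ = R p₁ + (1 + R) δω · 2sc` and
`4p₁⁴ (q₁₁ q₂₂ - q₁₂²) = δω²c² (4p₁²R - δ((1 + R)ωc - 2p₁s)²)`.
By Cauchy–Schwarz `((1 + R)ωc - 2p₁s)² ≤ (1 + R)²ω² + 4p₁² = 2R(1 + R)ω²`, so the determinant
stays nonnegative up to `δ = 2p₁²/((1 + R)ω²) = δ†`; `q₂₂ ≥ 0` follows likewise from `2p₁ ≤ Rω`.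
-/

open Real Matrix

theorem Matrix.posSemidef_fin_two_of {K : Type*} [Field K] [LinearOrder K] [IsStrictOrderedRing K]
    [StarRing K] [TrivialStar K] {a b c : K} (ha : 0 ≤ a) (hc : 0 ≤ c) (hb : b ^ 2 ≤ a * c) :
    (!![a, b; b, c]).PosSemidef := by
  refine .of_dotProduct_mulVec_nonneg ?_ fun v ↦ ?_
  · ext i j; fin_cases i <;> fin_cases j <;> simp
  · simp only [star_trivial, dotProduct, mulVec, Fin.sum_univ_two, cons_val', cons_val_zero,
      cons_val_one, empty_val', cons_val_fin_one, of_apply]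
    rcases ha.eq_or_lt with rfl | ha
    · obtain rfl : b = 0 := by nlinarith
      nlinarith [mul_nonneg hc (sq_nonneg (v 1))]
    · nlinarith [sq_nonneg (a * v 0 + b * v 1), mul_nonneg (sub_nonneg.2 hb) (sq_nonneg (v 1))]

theorem neg_half_smul_lyapunov_fin_two (p η a b : ℝ) :
    -((1 : ℝ) / 2) • (!![1, 1 / p; 1 / p, η] * !![0, 1; a, b]
      + (!![0, 1; a, b])ᵀ * !![1, 1 / p; 1 / p, η]) =
      !![-a / p, -(1 + b / p + η * a) / 2; -(1 + b / p + η * a) / 2, -1 / p - η * b] := by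
  ext i j; fin_cases i <;> fin_cases j <;> simp [mul_apply, Fin.sum_univ_two] <;> ring

section

variable {p ω δ R : ℝ}

theorem lyapunovRate_q22_numerator_nonneg (hp : 0 < p) (hω : 0 < ω) (hδ : 0 ≤ δ)
    (hR : ω ^ 2 * (R ^ 2 - 1) = 4 * p ^ 2) (hδR : 2 * δ ≤ R - 1) {s c : ℝ}
    (hsc : s ^ 2 + c ^ 2 = 1) : 0 ≤ R * p + 2 * (1 + R) * δ * ω * s * c := by
  have hR0 : 0 ≤ R := by linarith
  have h2sc : -1 ≤ 2 * s * c := by nlinarith [sq_nonneg (s + c)]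
  have hpR : 2 * p ≤ ω * R := by nlinarith [mul_nonneg hω.le hR0]
  have hωR : (R ^ 2 - 1) * ω ≤ 2 * p * R := by
    refine le_of_mul_le_mul_left ?_ hω
    nlinarith [mul_le_mul_of_nonneg_left hpR (by linarith : 0 ≤ 2 * p)]
  have hδω : 2 * ((1 + R) * δ * ω) ≤ 2 * (R * p) := by
    nlinarith [mul_le_mul_of_nonneg_left hδR (by positivity : 0 ≤ (1 + R) * ω)]
  nlinarith [mul_le_mul_of_nonneg_left h2sc (by positivity : 0 ≤ (1 + R) * δ * ω)]

theorem lyapunovRate_det_numerator_nonneg (hδ : 0 ≤ δ)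
    (hR : ω ^ 2 * (R ^ 2 - 1) = 4 * p ^ 2) (hδR : 2 * δ ≤ R - 1) {s c : ℝ}
    (hsc : s ^ 2 + c ^ 2 = 1) : 0 ≤ 4 * p ^ 2 * R - δ * ((1 + R) * ω * c - 2 * p * s) ^ 2 := by
  have hR0 : 0 ≤ R := by linarith
  have hCS : ((1 + R) * ω * c - 2 * p * s) ^ 2 ≤ 2 * R * (1 + R) * ω ^ 2 := by
    nlinarith [sq_nonneg ((1 + R) * ω * s + 2 * p * c)]
  rw [sub_nonneg]
  calc δ * ((1 + R) * ω * c - 2 * p * s) ^ 2 ≤ δ * (2 * R * (1 + R) * ω ^ 2) :=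
        mul_le_mul_of_nonneg_left hCS hδ
    _ ≤ (R - 1) / 2 * (2 * R * (1 + R) * ω ^ 2) :=
        mul_le_mul_of_nonneg_right (by linarith) (by positivity)
    _ = 4 * p ^ 2 * R := by linear_combination R * hR

theorem lyapunovRate_posSemidef (hp : 0 < p) (hω : 0 < ω) (hδ : 0 ≤ δ)
    (hR : ω ^ 2 * (R ^ 2 - 1) = 4 * p ^ 2) (hδR : 2 * δ ≤ R - 1) {s c η a b : ℝ}
    (hsc : s ^ 2 + c ^ 2 = 1) (hη : η = (1 + R) / p ^ 2) (ha : a = -δ * ω ^ 2 * c ^ 2)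
    (hb : b = -p - δ * ω * (2 * s * c)) :
    (!![-a / p, -(1 + b / p + η * a) / 2;
      -(1 + b / p + η * a) / 2, -1 / p - η * b]).PosSemidef := by
  subst hη ha hb
  have hq22 : -1 / p - (1 + R) / p ^ 2 * (-p - δ * ω * (2 * s * c))
      = (R * p + 2 * (1 + R) * δ * ω * s * c) / p ^ 2 := by
    field_simp; ring
  have hdet : -(-δ * ω ^ 2 * c ^ 2) / p * ((R * p + 2 * (1 + R) * δ * ω * s * c) / p ^ 2)
      - (-(1 + (-p - δ * ω * (2 * s * c)) / p + (1 + R) / p ^ 2 * (-δ * ω ^ 2 * c ^ 2)) / 2) ^ 2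
      = δ * ω ^ 2 * c ^ 2 / (4 * p ^ 4)
        * (4 * p ^ 2 * R - δ * ((1 + R) * ω * c - 2 * p * s) ^ 2) := by
    field_simp; ring
  refine posSemidef_fin_two_of ?_ ?_ ?_
  · rw [neg_mul, neg_mul, neg_neg]; positivity
  · rw [hq22]
    exact div_nonneg (lyapunovRate_q22_numerator_nonneg hp hω hδ hR hδR hsc) (by positivity)
  · rw [hq22, ← sub_nonneg, hdet]
    exact mul_nonneg (by positivity) (lyapunovRate_det_numerator_nonneg hδ hR hδR hsc)

end

theorem mul_sqrt_one_add_div_sq {ω x : ℝ} (hω : 0 < ω) (hx : 0 ≤ x) :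
    ω * √(1 + x / ω ^ 2) = √(ω ^ 2 + x) := by
  rw [← sqrt_sq hω.le, ← sqrt_mul (sq_nonneg ω), sqrt_sq hω.le]
  congr 1
  field_simp

/-- With `η = η†` and `0 < δ ≤ δ†`, the symmetric matrix
`Q t = -(1/2) (P A t + (A t)ᵀ P)` is positive semidefinite for every `t`. -/
theorem Q_posSemidef_at_eta_dagger
    (p₁ ω δ : ℝ) (hp₁ : 0 < p₁) (hω : 0 < ω)
    (ηd δd : ℝ)
    (hηd : ηd = (1 / p₁ ^ 2) * (1 + Real.sqrt (1 + 4 * p₁ ^ 2 / ω ^ 2)))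
    (hδd : δd = (Real.sqrt (ω ^ 2 + 4 * p₁ ^ 2) - ω) / (2 * ω))
    (hδ : 0 < δ) (hδ' : δ ≤ δd)
    (A : ℝ → Matrix (Fin 2) (Fin 2) ℝ)
    (hA : ∀ t : ℝ, A t =
      !![0, 1; -δ * ω ^ 2 * (cos (ω * t)) ^ 2, -p₁ - δ * ω * sin (2 * ω * t)])
    (P : Matrix (Fin 2) (Fin 2) ℝ) (hP : P = !![1, 1 / p₁; 1 / p₁, ηd])
    (Q : ℝ → Matrix (Fin 2) (Fin 2) ℝ)
    (hQ : ∀ t : ℝ, Q t = -((1 : ℝ) / 2) • (P * A t + (A t)ᵀ * P)) :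
    ∀ t : ℝ, (Q t).PosSemidef := by
  intro t
  set R := √(1 + 4 * p₁ ^ 2 / ω ^ 2)
  have h4p : 0 ≤ 4 * p₁ ^ 2 := by positivity
  have hR : ω ^ 2 * (R ^ 2 - 1) = 4 * p₁ ^ 2 := by
    rw [sq_sqrt (by positivity)]; field_simp; ring
  have hδR : 2 * δ ≤ R - 1 := by
    rw [hδd, ← mul_sqrt_one_add_div_sq hω h4p, le_div_iff₀ (by positivity)] at hδ'
    nlinarith
  rw [hQ, hA, hP, neg_half_smul_lyapunov_fin_two]
  refine lyapunovRate_posSemidef hp₁ hω hδ.le hR hδR (sin_sq_add_cos_sq (ω * t)) ?_ rfl ?_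
  · rw [hηd]; ring
  · rw [mul_assoc 2, sin_two_mul]
end
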